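/- Let D_1, ..., D_i, a_1, ..., a_i be 2i mutually independent random variables with values in F_q, where each D_j has the sparse distribution with parameter p' and each a_j has the sparse distribution with parameter p_0. Then for every t in F_q, Pr{D_1 a_1 + D_2 a_2 + ... + D_i a_i = t} = β_i(p_0 + (1 - p_0)p', t). -/

import Mathlib

open MeasureTheory ProbabilityTheory

/-- A random variable `X` with values in a finite field `F` has the sparse distribution
with parameter `p` if `Pr{X = 0} = p` and `Pr{X = t} = (1 - p)/(q - 1)` for each nonzero
`t`, where `q` is the cardinality of `F`. -/
def HasSparseDist {Ω F : Type*} [MeasurableSpace Ω] [Fintype F] [Zero F]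
    (μ : Measure Ω) (X : Ω → F) (p : ℝ) : Prop :=
  (μ {ω | X ω = 0}).toReal = p ∧
  ∀ t : F, t ≠ 0 → (μ {ω | X ω = t}).toReal = (1 - p) / ((Fintype.card F : ℝ) - 1)

/-- `β_k(p, t)` from the paper: the probability that a sum of `k` i.i.d. sparse random
variables over a field of size `q` equals `t`. -/
noncomputable def beta {F : Type*} [Zero F] [DecidableEq F]
    (q : ℝ) (k : ℕ) (p : ℝ) (t : F) : ℝ :=
  if t = 0 then (1 / q) * (1 + (q - 1) * (1 - q * (1 - p) / (q - 1)) ^ k)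
  else (1 / q) * (1 - (1 - q * (1 - p) / (q - 1)) ^ k)

/-!
With `c = (1 - p)/(q - 1)` and `r = p - c = 1 - q c`, the sparse law with parameter `p` is
`c + r δ₀`, the mixture `r δ₀ + (1 - r) · uniform`. Adding an independent sparse variable to `X`
turns the law `f` of `X` into `c + r f`, so a sum of `k` independent sparse variables has law
`r^k δ₀ + (1 - r^k) · uniform`, which is `β_k(p, ·)`.

A product `D a` of independent sparse variables vanishes with probability `p₀ + (1 - p₀) p'`,
and given `D = x ≠ 0` it is distributed as `a`, whose law is constant on `F^×`; so `D a` is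
sparse with parameter `p₀ + (1 - p₀) p'`. The products `D_j a_j` are built from disjoint blocks
of the independent family, which makes each partial sum independent of the next product.
-/

lemma beta_zero {F : Type*} [Zero F] [DecidableEq F] {q : ℝ} (hq : q ≠ 0) (p : ℝ) (t : F) :
    _root_.beta q 0 p t = if t = 0 then 1 else 0 := by
  unfold _root_.beta
  split_ifs <;> field_simp <;> ring

lemma beta_succ {F : Type*} [Zero F] [DecidableEq F] {q : ℝ} (hq : q ≠ 0) (hq1 : q - 1 ≠ 0)
    (k : ℕ) (p : ℝ) (t : F) :
    _root_.beta q (k + 1) p t =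
      (1 - p) / (q - 1) + (p - (1 - p) / (q - 1)) * _root_.beta q k p t := by
  have hr : 1 - q * (1 - p) / (q - 1) = p - (1 - p) / (q - 1) := by field_simp; ring
  unfold _root_.beta
  rw [hr]
  set r := p - (1 - p) / (q - 1) with hr_def
  have hc : (1 - p) / (q - 1) = (1 - r) / q := by rw [hr_def]; field_simp; ring
  rw [hc]
  split_ifs <;> field_simp <;> ring

section

variable {Ω : Type*} [MeasurableSpace Ω] {μ : Measure Ω}

lemma sum_measureReal_fiber_eq_one {α : Type*} [Fintype α] [MeasurableSpace α]
    [MeasurableSingletonClass α] [IsProbabilityMeasure μ] {X : Ω → α} (hX : Measurable X) :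
    ∑ x, μ.real {ω | X ω = x} = 1 := by
  rw [← probReal_univ (μ := μ), ← Set.preimage_univ (f := X), ← Finset.coe_univ,
    ← sum_measureReal_preimage_singleton _ fun x _ => hX (measurableSet_singleton x)]
  rfl

lemma ProbabilityTheory.IndepFun.measureReal_eq_sum_fiber_mul {α β γ : Type*} [Fintype α]
    [MeasurableSpace α] [MeasurableSingletonClass α] [MeasurableSpace β] [MeasurableSpace γ]
    [MeasurableSingletonClass γ] [IsFiniteMeasure μ] {X : Ω → α} {Y : Ω → β}
    (h : IndepFun X Y μ) (hX : Measurable X) (hY : Measurable Y) {g : α → β → γ}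
    (hg : ∀ x, Measurable (g x)) (t : γ) :
    μ.real {ω | g (X ω) (Y ω) = t} =
      ∑ x, μ.real {ω | X ω = x} * μ.real {ω | g x (Y ω) = t} := by
  have hunion : {ω | g (X ω) (Y ω) = t} =
      ⋃ x ∈ Finset.univ, X ⁻¹' {x} ∩ Y ⁻¹' (g x ⁻¹' {t}) := by
    ext ω; simp
  rw [hunion, measureReal_biUnion_finset
    ((Set.pairwiseDisjoint_fiber X _).mono fun x => Set.inter_subset_left)
    (fun x _ => (hX (measurableSet_singleton x)).inter (hY (hg x (measurableSet_singleton t))))]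
  refine Finset.sum_congr rfl fun x _ => ?_
  simp only [measureReal_def, h.measure_inter_preimage_eq_mul _ _ (measurableSet_singleton x)
    (hg x (measurableSet_singleton t)), ENNReal.toReal_mul]
  rfl

lemma ProbabilityTheory.iIndepFun.indepFun_sum_mul_of_notMem {ι R : Type*} [CommSemiring R]
    [MeasurableSpace R] [MeasurableAdd₂ R] [MeasurableMul₂ R] {D a : ι → Ω → R}
    (h : iIndepFun (Sum.elim D a) μ) (hD : ∀ j, Measurable (D j)) (ha : ∀ j, Measurable (a j))
    {s : Finset ι} {j : ι} (hj : j ∉ s) :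
    IndepFun (fun ω => ∑ k ∈ s, D k ω * a k ω) (fun ω => D j ω * a j ω) μ := by
  classical
  have hdisj : Disjoint (s.disjSum s) ({Sum.inl j, Sum.inr j} : Finset (ι ⊕ ι)) := by simpa
  have hblocks := h.indepFun_finset _ _ hdisj (Sum.rec hD ha)
  have hφ : Measurable fun x : (s.disjSum s → R) => ∑ k ∈ s.attach,
      x ⟨Sum.inl k, by simp⟩ * x ⟨Sum.inr k, by simp⟩ := by fun_prop
  have hψ : Measurable fun x : ({Sum.inl j, Sum.inr j} : Finset (ι ⊕ ι)) → R =>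
      x ⟨Sum.inl j, by simp⟩ * x ⟨Sum.inr j, by simp⟩ := by fun_prop
  convert hblocks.comp hφ hψ using 1
  · funext ω
    exact (Finset.sum_attach s fun k => D k ω * a k ω).symm
  · rfl

section FiniteField

variable {F : Type*} [Field F] [Fintype F] [DecidableEq F]

variable (F) in
noncomputable def sparseProb (p : ℝ) (t : F) : ℝ :=
  if t = 0 then p else (1 - p) / ((Fintype.card F : ℝ) - 1)

lemma sparseProb_eq_add_mul_ite (p : ℝ) (t : F) :
    sparseProb F p t = (1 - p) / ((Fintype.card F : ℝ) - 1) +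
      (p - (1 - p) / ((Fintype.card F : ℝ) - 1)) * if t = 0 then 1 else 0 := by
  unfold sparseProb
  split_ifs <;> ring

lemma sparseProb_add_one_sub_mul (p' p₀ : ℝ) (t : F) :
    sparseProb F (p₀ + (1 - p₀) * p') t =
      p' * (if t = 0 then 1 else 0) + (1 - p') * sparseProb F p₀ t := by
  unfold sparseProb
  split_ifs <;> ring

lemma sparseProb_inv_mul {x : F} (hx : x ≠ 0) (p : ℝ) (t : F) :
    sparseProb F p (x⁻¹ * t) = sparseProb F p t := by
  simp [sparseProb, hx]

lemma hasSparseDist_iff {X : Ω → F} {p : ℝ} :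
    HasSparseDist μ X p ↔ ∀ t, μ.real {ω | X ω = t} = sparseProb F p t := by
  simp only [HasSparseDist, ← measureReal_def]
  refine ⟨fun h t => ?_, fun h => ⟨by simpa [sparseProb] using h 0, fun t ht => by
    simpa [sparseProb, ht] using h t⟩⟩
  by_cases ht : t = 0
  · simpa [sparseProb, ht] using h.1
  · simpa [sparseProb, ht] using h.2 t ht

variable [MeasurableSpace F] [MeasurableSingletonClass F] [IsProbabilityMeasure μ]

lemma ProbabilityTheory.IndepFun.measureReal_add_eq_of_hasSparseDist {X Y : Ω → F} {p : ℝ}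
    (h : IndepFun X Y μ) (hX : Measurable X) (hY : Measurable Y) (hYd : HasSparseDist μ Y p)
    (t : F) :
    μ.real {ω | X ω + Y ω = t} = (1 - p) / ((Fintype.card F : ℝ) - 1) +
      (p - (1 - p) / ((Fintype.card F : ℝ) - 1)) * μ.real {ω | X ω = t} := by
  have hfiber (x : F) : μ.real {ω | x + Y ω = t} = sparseProb F p (t - x) := by
    rw [← hasSparseDist_iff.1 hYd]
    simp only [eq_sub_iff_add_eq']
  rw [h.measureReal_eq_sum_fiber_mul hX hY (fun x => measurable_const_add x) t]
  simp only [hfiber, sparseProb_eq_add_mul_ite, sub_eq_zero, mul_add, Finset.sum_add_distrib,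
    ← Finset.sum_mul, sum_measureReal_fiber_eq_one hX, mul_ite, mul_one, mul_zero,
    Finset.sum_ite_eq, Finset.mem_univ, if_true]
  ring

lemma ProbabilityTheory.IndepFun.hasSparseDist_mul {X Y : Ω → F} {p' p₀ : ℝ}
    (h : IndepFun X Y μ) (hX : Measurable X) (hY : Measurable Y) (hXd : HasSparseDist μ X p')
    (hYd : HasSparseDist μ Y p₀) :
    HasSparseDist μ (fun ω => X ω * Y ω) (p₀ + (1 - p₀) * p') := by
  have hfiber (x t : F) : μ.real {ω | x * Y ω = t} =
      sparseProb F p₀ t + ((if t = 0 then 1 else 0) - sparseProb F p₀ t) *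
        if x = 0 then 1 else 0 := by
    by_cases hx : x = 0
    · by_cases ht : t = 0 <;> simp [hx, ht, eq_comm]
    · rw [← sparseProb_inv_mul hx, ← hasSparseDist_iff.1 hYd]
      simp [hx, eq_inv_mul_iff_mul_eq₀ hx]
  have hX0 : μ.real {ω | X ω = 0} = p' := hXd.1
  rw [hasSparseDist_iff]
  intro t
  rw [h.measureReal_eq_sum_fiber_mul hX hY (fun x => measurable_const_mul x) t]
  simp only [hfiber, mul_add, Finset.sum_add_distrib, ← Finset.sum_mul,
    sum_measureReal_fiber_eq_one hX, mul_ite, mul_one, mul_zero, Finset.sum_ite_eq',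
    Finset.mem_univ, if_true, sparseProb_add_one_sub_mul, hX0]
  split_ifs <;> ring

lemma measureReal_sum_eq_beta {ι : Type*} {Y : ι → Ω → F} {p : ℝ}
    (hY : ∀ j, Measurable (Y j)) (hYd : ∀ j, HasSparseDist μ (Y j) p)
    (hindep : ∀ (s : Finset ι) (j : ι), j ∉ s → IndepFun (fun ω => ∑ k ∈ s, Y k ω) (Y j) μ)
    (s : Finset ι) (t : F) :
    μ.real {ω | ∑ k ∈ s, Y k ω = t} = _root_.beta (Fintype.card F : ℝ) s.card p t := by
  classical
  have hq : (1 : ℝ) < Fintype.card F := by exact_mod_cast Fintype.one_lt_card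
  induction s using Finset.induction_on generalizing t with
  | empty =>
    by_cases ht : t = 0 <;>
      simp [beta_zero (by positivity : (Fintype.card F : ℝ) ≠ 0), ht, eq_comm]
  | insert j s hj ih =>
    simp only [Finset.sum_insert hj, add_comm (Y j _)]
    rw [(hindep s j hj).measureReal_add_eq_of_hasSparseDist
      (Finset.measurable_sum s fun k _ => hY k) (hY j) (hYd j), ih,
      Finset.card_insert_of_notMem hj, beta_succ (by positivity) (by linarith)]

end FiniteField

end

theorem sum_of_products_of_sparse_general {Ω F : Type*} [MeasurableSpace Ω]
    [Field F] [Fintype F] [DecidableEq F]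
    [MeasurableSpace F] [MeasurableSingletonClass F]
    (μ : Measure Ω)
    (i : ℕ) (D a : Fin i → Ω → F) (p' p₀ : ℝ)
    (hDmeas : ∀ j, Measurable (D j)) (hameas : ∀ j, Measurable (a j))
    (hindep : iIndepFun (Sum.elim D a) μ)
    (hD : ∀ j, HasSparseDist μ (D j) p')
    (ha : ∀ j, HasSparseDist μ (a j) p₀)
    (t : F) :
    (μ {ω | ∑ j, D j ω * a j ω = t}).toReal =
      beta (Fintype.card F : ℝ) i (p₀ + (1 - p₀) * p') t := by
  have := hindep.isProbabilityMeasure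
  have hprod (j : Fin i) : HasSparseDist μ (fun ω => D j ω * a j ω) (p₀ + (1 - p₀) * p') :=
    (hindep.indepFun (i := Sum.inl j) (j := Sum.inr j) Sum.inl_ne_inr).hasSparseDist_mul
      (hDmeas j) (hameas j) (hD j) (ha j)
  simpa [measureReal_def] using measureReal_sum_eq_beta (fun j => (hDmeas j).mul (hameas j))
    hprod (fun s j hj => hindep.indepFun_sum_mul_of_notMem hDmeas hameas hj) Finset.univ t

/-- if `D 1, …, D i, a 1, …, a i` are `2i` mutually independent random
variables over `F_q`, the `D j` sparse with parameter `p'` and the `a j` sparse with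
parameter `p₀`, then `Pr{∑ j, D j * a j = t} = β_i(p₀ + (1 - p₀) p', t)`. -/
theorem sum_of_products_of_sparse {Ω F : Type*} [MeasurableSpace Ω]
    [Field F] [Fintype F] [DecidableEq F]
    [MeasurableSpace F] [MeasurableSingletonClass F]
    (μ : Measure Ω) [IsProbabilityMeasure μ]
    (i : ℕ) (D a : Fin i → Ω → F) (p' p₀ : ℝ)
    (hp'0 : 0 ≤ p') (hp'1 : p' ≤ 1) (hp₀0 : 0 ≤ p₀) (hp₀1 : p₀ ≤ 1)
    (hDmeas : ∀ j, Measurable (D j)) (hameas : ∀ j, Measurable (a j))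
    (hindep : iIndepFun (Sum.elim D a) μ)
    (hD : ∀ j, HasSparseDist μ (D j) p')
    (ha : ∀ j, HasSparseDist μ (a j) p₀)
    (t : F) :
    (μ {ω | ∑ j, D j ω * a j ω = t}).toReal =
      beta (Fintype.card F : ℝ) i (p₀ + (1 - p₀) * p') t :=
  sum_of_products_of_sparse_general μ i D a p' p₀ hDmeas hameas hindep hD ha t
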